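/- For every 𝐮 ∈ ℍ with 𝐮 ≠ (0,0,0), there exists a unique t̄ > 0 such that t̄·𝐮 ∈ 𝒩, and moreover I(t̄·𝐮) = max_{t ≥ 0} I(t·𝐮). -/

import Mathlib

open MeasureTheory Real Filter Topology

noncomputable section

/-- `H¹(ℝᴺ)` membership (with the weak gradient realized as the classical gradient),
together with the `L^{p+1}` integrability granted by the Sobolev embedding. -/
def MemH1 {N : ℕ} (p : ℝ) (u : EuclideanSpace ℝ (Fin N) → ℝ) : Prop :=
  MemLp u 2 volume ∧ Differentiable ℝ u ∧
    MemLp (fun x => ‖gradient u x‖) 2 volume ∧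
    MemLp u (ENNReal.ofReal (p + 1)) volume ∧ MemLp u 3 volume

/-- squared (unweighted) `H¹` norm. -/
def h1normSq {N : ℕ} (u : EuclideanSpace ℝ (Fin N) → ℝ) : ℝ :=
  ∫ x, ‖gradient u x‖ ^ 2 + (u x) ^ 2

/-- The Nehari functional `G(u) = I'(u)[u]`. -/
def GFun {N : ℕ} (ω₁ ω₂ ω₃ γ p : ℝ) (u₁ u₂ u₃ : EuclideanSpace ℝ (Fin N) → ℝ) : ℝ :=
  ((∫ x, ‖gradient u₁ x‖ ^ 2 + ω₁ * (u₁ x) ^ 2) +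
   (∫ x, ‖gradient u₂ x‖ ^ 2 + ω₂ * (u₂ x) ^ 2) +
   (∫ x, ‖gradient u₃ x‖ ^ 2 + ω₃ * (u₃ x) ^ 2)) -
  ((∫ x, |u₁ x| ^ (p + 1)) + (∫ x, |u₂ x| ^ (p + 1)) + (∫ x, |u₃ x| ^ (p + 1))) -
  3 * γ * ∫ x, u₁ x * u₂ x * u₃ x

/-- Membership in the Nehari manifold `𝒩`. -/
def InNehari {N : ℕ} (ω₁ ω₂ ω₃ γ p : ℝ) (u₁ u₂ u₃ : EuclideanSpace ℝ (Fin N) → ℝ) : Prop :=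
  MemH1 p u₁ ∧ MemH1 p u₂ ∧ MemH1 p u₃ ∧
  ¬(u₁ = 0 ∧ u₂ = 0 ∧ u₃ = 0) ∧
  GFun ω₁ ω₂ ω₃ γ p u₁ u₂ u₃ = 0

/-- The action functional `I`. -/
def IFun {N : ℕ} (ω₁ ω₂ ω₃ γ p : ℝ) (u₁ u₂ u₃ : EuclideanSpace ℝ (Fin N) → ℝ) : ℝ :=
  (1 / 2 * (∫ x, ‖gradient u₁ x‖ ^ 2 + ω₁ * (u₁ x) ^ 2) - 1 / (p + 1) * ∫ x, |u₁ x| ^ (p + 1)) +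
  (1 / 2 * (∫ x, ‖gradient u₂ x‖ ^ 2 + ω₂ * (u₂ x) ^ 2) - 1 / (p + 1) * ∫ x, |u₂ x| ^ (p + 1)) +
  (1 / 2 * (∫ x, ‖gradient u₃ x‖ ^ 2 + ω₃ * (u₃ x) ^ 2) - 1 / (p + 1) * ∫ x, |u₃ x| ^ (p + 1)) -
  γ * ∫ x, u₁ x * u₂ x * u₃ x

end

/-! Along a ray `t ↦ t𝐮` everything is explicit: with `𝒜 = quadCoeff`, `ℬ = powCoeff`,
`ℂ = cubicCoeff` one has `I(t𝐮) = 𝒜t²/2 - ℬt^{p+1}/(p+1) - ℂt³`, `G(t𝐮) = t² g(t)` with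
`g(t) = 𝒜 - ℬt^{p-1} - 3ℂt`, and `d/dt I(t𝐮) = t g(t)`. For `p > 2` the quotient
`g(t)/t = 𝒜/t - ℬt^{p-2} - 3ℂ` is strictly decreasing on `(0, ∞)` whatever the sign of `ℂ`,
so `g` has at most one positive zero; it has one because `g(0) = 𝒜 > 0` and `g → -∞`.
Hence `t ↦ I(t𝐮)` increases up to that zero and decreases after it. -/

namespace Fibering

variable (A B C p : ℝ)

noncomputable def map (t : ℝ) : ℝ := A / 2 * t ^ 2 - B / (p + 1) * t ^ (p + 1) - C * t ^ 3

noncomputable def reducedDeriv (t : ℝ) : ℝ := A - B * t ^ (p - 1) - 3 * C * t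

variable {A B C p}

theorem hasDerivAt_map {t : ℝ} (hp : 0 < p + 1) (ht : 0 < t) :
    HasDerivAt (map A B C p) (t * reducedDeriv A B C p t) t := by
  have hpow : HasDerivAt (fun x : ℝ => x ^ (p + 1)) ((p + 1) * t ^ p) t := by
    simpa using Real.hasDerivAt_rpow_const (x := t) (p := p + 1) (Or.inl ht.ne')
  refine ((((hasDerivAt_pow 2 t).const_mul (A / 2)).sub
    (hpow.const_mul (B / (p + 1)))).sub ((hasDerivAt_pow 3 t).const_mul C)).congr_deriv ?_
  have hsplit : t ^ p = t ^ (p - 1) * t := by rw [← Real.rpow_add_one ht.ne', sub_add_cancel]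
  rw [reducedDeriv, hsplit]
  field_simp
  ring

theorem continuous_map (hp : 0 < p + 1) : Continuous (map A B C p) := by
  unfold map
  have := Real.continuous_rpow_const hp.le
  fun_prop

theorem continuous_reducedDeriv (hp : 1 ≤ p) : Continuous (reducedDeriv A B C p) := by
  unfold reducedDeriv
  have := Real.continuous_rpow_const (sub_nonneg.2 hp)
  fun_prop

theorem tendsto_reducedDeriv_atTop (hB : 0 < B) (hp : 2 < p) :
    Tendsto (reducedDeriv A B C p) atTop atBot := by
  have hgrowth : Tendsto (fun t => t * (B * t ^ (p - 2) + 3 * C)) atTop atTop :=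
    tendsto_id.atTop_mul_atTop₀ <|
      ((tendsto_rpow_atTop (by linarith)).const_mul_atTop hB).atTop_add tendsto_const_nhds
  refine (tendsto_const_nhds (x := A)).add_atBot (tendsto_neg_atTop_atBot.comp hgrowth)
    |>.congr' ?_
  filter_upwards [eventually_gt_atTop 0] with t ht
  have hsplit : t ^ (p - 1) = t ^ (p - 2) * t := by
    rw [← Real.rpow_add_one ht.ne']; ring_nf
  simp only [reducedDeriv, hsplit, Function.comp_apply]
  ring

variable (hA : 0 < A) (hB : 0 < B) (hp : 2 < p)
include hA hB hp

theorem mul_reducedDeriv_lt_mul {s t : ℝ} (hs : 0 < s) (hst : s < t) :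
    s * reducedDeriv A B C p t < t * reducedDeriv A B C p s := by
  have ht : 0 < t := hs.trans hst
  have hmono : s ^ (p - 2) < t ^ (p - 2) := Real.rpow_lt_rpow hs.le hst (by linarith)
  have hsplit : ∀ r : ℝ, 0 < r → r ^ (p - 1) = r ^ (p - 2) * r := fun r hr => by
    rw [← Real.rpow_add_one hr.ne']; ring_nf
  have key : t * reducedDeriv A B C p s - s * reducedDeriv A B C p t
      = A * (t - s) + B * (s * t) * (t ^ (p - 2) - s ^ (p - 2)) := by
    rw [reducedDeriv, reducedDeriv, hsplit s hs, hsplit t ht]; ring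
  nlinarith [mul_pos hA (sub_pos.2 hst), mul_pos (mul_pos hB (mul_pos hs ht)) (sub_pos.2 hmono)]

theorem reducedDeriv_pos_of_lt {tb s : ℝ} (hz : reducedDeriv A B C p tb = 0) (hs : 0 < s)
    (hstb : s < tb) : 0 < reducedDeriv A B C p s := by
  have := mul_reducedDeriv_lt_mul hA hB hp (C := C) hs hstb
  rw [hz, mul_zero] at this
  exact pos_of_mul_pos_right this (hs.trans hstb).le

theorem reducedDeriv_neg_of_gt {tb t : ℝ} (htb : 0 < tb) (hz : reducedDeriv A B C p tb = 0)
    (htbt : tb < t) : reducedDeriv A B C p t < 0 := by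
  have := mul_reducedDeriv_lt_mul hA hB hp (C := C) htb htbt
  rw [hz, mul_zero] at this
  exact neg_of_mul_neg_right this htb.le

theorem eq_of_reducedDeriv_eq_zero {s t : ℝ} (hs : 0 < s) (ht : 0 < t)
    (hzs : reducedDeriv A B C p s = 0) (hzt : reducedDeriv A B C p t = 0) : s = t := by
  rcases lt_trichotomy s t with hst | hst | hst
  · exact absurd hzs (reducedDeriv_pos_of_lt hA hB hp hzt hs hst).ne'
  · exact hst
  · exact absurd hzt (reducedDeriv_pos_of_lt hA hB hp hzs ht hst).ne'

theorem exists_reducedDeriv_eq_zero : ∃ tb, 0 < tb ∧ reducedDeriv A B C p tb = 0 := by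
  obtain ⟨T, hT, hTpos⟩ := ((tendsto_reducedDeriv_atTop (A := A) (C := C) hB hp).eventually
    (eventually_lt_atBot 0) |>.and (eventually_gt_atTop 0)).exists
  have h0 : reducedDeriv A B C p 0 = A := by
    simp [reducedDeriv, Real.zero_rpow (show p - 1 ≠ 0 by linarith)]
  obtain ⟨tb, htb, hz⟩ := intermediate_value_Ioc' hTpos.le
    (continuous_reducedDeriv (by linarith)).continuousOn
    (show (0 : ℝ) ∈ _ from ⟨hT.le, h0.symm ▸ hA⟩)
  exact ⟨tb, htb.1, hz⟩

theorem map_le_map {tb : ℝ} (htb : 0 < tb) (hz : reducedDeriv A B C p tb = 0) {t : ℝ}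
    (ht : 0 ≤ t) : map A B C p t ≤ map A B C p tb := by
  have hp1 : 0 < p + 1 := by linarith
  have hderiv {x : ℝ} (hx : 0 < x) : deriv (map A B C p) x = x * reducedDeriv A B C p x :=
    (hasDerivAt_map hp1 hx).deriv
  rcases le_total t tb with htt | htt
  · refine (strictMonoOn_of_deriv_pos (convex_Icc 0 tb) (continuous_map hp1).continuousOn
      fun x hx => ?_).monotoneOn ⟨ht, htt⟩ ⟨htb.le, le_rfl⟩ htt
    rw [interior_Icc] at hx
    rw [hderiv hx.1]
    exact mul_pos hx.1 (reducedDeriv_pos_of_lt hA hB hp hz hx.1 hx.2)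
  · refine (strictAntiOn_of_deriv_neg (convex_Ici tb) (continuous_map hp1).continuousOn
      fun x hx => ?_).antitoneOn Set.self_mem_Ici htt htt
    rw [interior_Ici] at hx
    rw [hderiv (htb.trans hx)]
    exact mul_neg_of_pos_of_neg (htb.trans hx) (reducedDeriv_neg_of_gt hA hB hp htb hz hx)

end Fibering

section

variable {α : Type*} [MeasurableSpace α] {μ : Measure α}

theorem integral_abs_const_mul_rpow (u : α → ℝ) {t : ℝ} (ht : 0 ≤ t) (q : ℝ) :
    ∫ x, |t * u x| ^ q ∂μ = t ^ q * ∫ x, |u x| ^ q ∂μ := by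
  simp_rw [← integral_const_mul, abs_mul, abs_of_nonneg ht, Real.mul_rpow ht (abs_nonneg _)]

theorem integral_const_mul_mul_mul (u₁ u₂ u₃ : α → ℝ) (t : ℝ) :
    ∫ x, t * u₁ x * (t * u₂ x) * (t * u₃ x) ∂μ = t ^ 3 * ∫ x, u₁ x * u₂ x * u₃ x ∂μ := by
  rw [← integral_const_mul]
  congr 1 with x
  ring

end

section

variable {E : Type*} [NormedAddCommGroup E] [InnerProductSpace ℝ E] [CompleteSpace E]

theorem gradient_const_mul {u : E → ℝ} (hu : Differentiable ℝ u) (c : ℝ) (x : E) :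
    gradient (fun y => c * u y) x = c • gradient u x := by
  rw [gradient, show (fun y => c * u y) = c • u from rfl, fderiv_const_smul (hu x) c]
  exact (InnerProductSpace.toDual ℝ E).symm.map_smul c _

theorem integral_gradient_sq_add_const_mul [MeasurableSpace E] {μ : Measure E} {u : E → ℝ}
    (hu : Differentiable ℝ u) (t ω : ℝ) :
    ∫ x, ‖gradient (fun y => t * u y) x‖ ^ 2 + ω * (t * u x) ^ 2 ∂μ
      = t ^ 2 * ∫ x, ‖gradient u x‖ ^ 2 + ω * u x ^ 2 ∂μ := by
  simp_rw [← integral_const_mul, gradient_const_mul hu, norm_smul, Real.norm_eq_abs, mul_pow,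
    sq_abs]
  congr 1 with x
  ring

end

section Positivity

variable {X : Type*} [TopologicalSpace X] [MeasurableSpace X] {μ : Measure X} [μ.IsOpenPosMeasure]

theorem integral_pos_of_continuous_ne_zero {u : X → ℝ} (hu : Continuous u) (hu0 : u ≠ 0)
    {F : X → ℝ} (hF : 0 ≤ F) (hFi : Integrable F μ) (hpos : ∀ x, u x ≠ 0 → 0 < F x) :
    0 < ∫ x, F x ∂μ := by
  rw [integral_pos_iff_support_of_nonneg hF hFi]
  obtain ⟨x₀, hx₀⟩ := Function.ne_iff.1 hu0
  exact ((isOpen_compl_singleton.preimage hu).measure_pos μ ⟨x₀, hx₀⟩).trans_le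
    (measure_mono fun x hx => (hpos x hx).ne')

end Positivity

namespace MemH1

variable {N : ℕ} {p : ℝ} {u : EuclideanSpace ℝ (Fin N) → ℝ}

theorem const_mul (h : MemH1 p u) (t : ℝ) : MemH1 p fun x => t * u x := by
  refine ⟨h.1.const_mul t, h.2.1.const_mul t, ?_, h.2.2.2.1.const_mul t, h.2.2.2.2.const_mul t⟩
  simp_rw [gradient_const_mul h.2.1, norm_smul, Real.norm_eq_abs]
  exact h.2.2.1.const_mul |t|

theorem integral_gradient_sq_add_pos {ω : ℝ} (hω : 0 < ω) (h : MemH1 p u) (hu : u ≠ 0) :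
    0 < ∫ x, ‖gradient u x‖ ^ 2 + ω * u x ^ 2 :=
  integral_pos_of_continuous_ne_zero h.2.1.continuous hu (fun x => by positivity)
    (h.2.2.1.integrable_sq.add (h.1.integrable_sq.const_mul ω)) fun x hx => by positivity

theorem integral_abs_rpow_pos (hp : 0 < p + 1) (h : MemH1 p u) (hu : u ≠ 0) :
    0 < ∫ x, |u x| ^ (p + 1) := by
  have hint := h.2.2.2.1.integrable_norm_rpow (by simpa using hp) ENNReal.ofReal_ne_top
  rw [ENNReal.toReal_ofReal hp.le] at hint
  exact integral_pos_of_continuous_ne_zero h.2.1.continuous hu (fun x => by positivity)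
    (by simpa only [Real.norm_eq_abs] using hint) fun x hx => by positivity

end MemH1

section Coefficients

variable {N : ℕ} (ω₁ ω₂ ω₃ γ p : ℝ) (u₁ u₂ u₃ : EuclideanSpace ℝ (Fin N) → ℝ)

noncomputable def quadCoeff : ℝ :=
  (∫ x, ‖gradient u₁ x‖ ^ 2 + ω₁ * (u₁ x) ^ 2) +
  (∫ x, ‖gradient u₂ x‖ ^ 2 + ω₂ * (u₂ x) ^ 2) +
  (∫ x, ‖gradient u₃ x‖ ^ 2 + ω₃ * (u₃ x) ^ 2)

noncomputable def powCoeff : ℝ :=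
  (∫ x, |u₁ x| ^ (p + 1)) + (∫ x, |u₂ x| ^ (p + 1)) + (∫ x, |u₃ x| ^ (p + 1))

noncomputable def cubicCoeff : ℝ := γ * ∫ x, u₁ x * u₂ x * u₃ x

variable {ω₁ ω₂ ω₃ γ p u₁ u₂ u₃}

theorem GFun_const_mul (hu₁ : Differentiable ℝ u₁) (hu₂ : Differentiable ℝ u₂)
    (hu₃ : Differentiable ℝ u₃) {t : ℝ} (ht : 0 < t) :
    GFun ω₁ ω₂ ω₃ γ p (fun x => t * u₁ x) (fun x => t * u₂ x) (fun x => t * u₃ x) =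
      t ^ 2 * Fibering.reducedDeriv (quadCoeff ω₁ ω₂ ω₃ u₁ u₂ u₃) (powCoeff p u₁ u₂ u₃)
        (cubicCoeff γ u₁ u₂ u₃) p t := by
  have hsplit : t ^ (p + 1) = t ^ (p - 1) * t ^ 2 := by
    rw [← Real.rpow_natCast, ← Real.rpow_add ht]; ring_nf
  simp only [GFun, Fibering.reducedDeriv, quadCoeff, powCoeff, cubicCoeff,
    integral_gradient_sq_add_const_mul hu₁, integral_gradient_sq_add_const_mul hu₂,
    integral_gradient_sq_add_const_mul hu₃, integral_abs_const_mul_rpow _ ht.le,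
    integral_const_mul_mul_mul, hsplit]
  ring

theorem IFun_const_mul (hu₁ : Differentiable ℝ u₁) (hu₂ : Differentiable ℝ u₂)
    (hu₃ : Differentiable ℝ u₃) {t : ℝ} (ht : 0 ≤ t) :
    IFun ω₁ ω₂ ω₃ γ p (fun x => t * u₁ x) (fun x => t * u₂ x) (fun x => t * u₃ x) =
      Fibering.map (quadCoeff ω₁ ω₂ ω₃ u₁ u₂ u₃) (powCoeff p u₁ u₂ u₃)
        (cubicCoeff γ u₁ u₂ u₃) p t := by
  simp only [IFun, Fibering.map, quadCoeff, powCoeff, cubicCoeff,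
    integral_gradient_sq_add_const_mul hu₁, integral_gradient_sq_add_const_mul hu₂,
    integral_gradient_sq_add_const_mul hu₃, integral_abs_const_mul_rpow _ ht,
    integral_const_mul_mul_mul]
  ring

theorem quadCoeff_pos (hω₁ : 0 < ω₁) (hω₂ : 0 < ω₂) (hω₃ : 0 < ω₃) (h₁ : MemH1 p u₁)
    (h₂ : MemH1 p u₂) (h₃ : MemH1 p u₃) (hne : ¬(u₁ = 0 ∧ u₂ = 0 ∧ u₃ = 0)) :
    0 < quadCoeff ω₁ ω₂ ω₃ u₁ u₂ u₃ := by
  have nonneg {ω : ℝ} (hω : 0 < ω) (u : EuclideanSpace ℝ (Fin N) → ℝ) :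
      0 ≤ ∫ x, ‖gradient u x‖ ^ 2 + ω * u x ^ 2 :=
    integral_nonneg fun x => by positivity
  rw [quadCoeff]
  obtain h | h | h : u₁ ≠ 0 ∨ u₂ ≠ 0 ∨ u₃ ≠ 0 := by tauto
  · linarith [h₁.integral_gradient_sq_add_pos hω₁ h, nonneg hω₂ u₂, nonneg hω₃ u₃]
  · linarith [h₂.integral_gradient_sq_add_pos hω₂ h, nonneg hω₁ u₁, nonneg hω₃ u₃]
  · linarith [h₃.integral_gradient_sq_add_pos hω₃ h, nonneg hω₁ u₁, nonneg hω₂ u₂]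

theorem powCoeff_pos (hp : 0 < p + 1) (h₁ : MemH1 p u₁) (h₂ : MemH1 p u₂) (h₃ : MemH1 p u₃)
    (hne : ¬(u₁ = 0 ∧ u₂ = 0 ∧ u₃ = 0)) : 0 < powCoeff p u₁ u₂ u₃ := by
  have nonneg (u : EuclideanSpace ℝ (Fin N) → ℝ) : 0 ≤ ∫ x, |u x| ^ (p + 1) :=
    integral_nonneg fun x => by positivity
  rw [powCoeff]
  obtain h | h | h : u₁ ≠ 0 ∨ u₂ ≠ 0 ∨ u₃ ≠ 0 := by tauto
  · linarith [h₁.integral_abs_rpow_pos hp h, nonneg u₂, nonneg u₃]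
  · linarith [h₂.integral_abs_rpow_pos hp h, nonneg u₁, nonneg u₃]
  · linarith [h₃.integral_abs_rpow_pos hp h, nonneg u₁, nonneg u₂]

end Coefficients

theorem stmt5_general (N : ℕ)
    (ω₁ ω₂ ω₃ p : ℝ) (hω₁ : 0 < ω₁) (hω₂ : 0 < ω₂) (hω₃ : 0 < ω₃)
    (hp : 2 < p) (γ : ℝ)
    (u₁ u₂ u₃ : EuclideanSpace ℝ (Fin N) → ℝ)
    (h₁ : MemH1 p u₁) (h₂ : MemH1 p u₂) (h₃ : MemH1 p u₃)
    (hne : ¬(u₁ = 0 ∧ u₂ = 0 ∧ u₃ = 0)) :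
    ∃ tb : ℝ, 0 < tb ∧
      InNehari ω₁ ω₂ ω₃ γ p (fun x => tb * u₁ x) (fun x => tb * u₂ x) (fun x => tb * u₃ x) ∧
      (∀ t : ℝ, 0 ≤ t →
        IFun ω₁ ω₂ ω₃ γ p (fun x => t * u₁ x) (fun x => t * u₂ x) (fun x => t * u₃ x) ≤
        IFun ω₁ ω₂ ω₃ γ p (fun x => tb * u₁ x) (fun x => tb * u₂ x) (fun x => tb * u₃ x)) ∧
      (∀ t : ℝ, 0 < t →
        InNehari ω₁ ω₂ ω₃ γ p (fun x => t * u₁ x) (fun x => t * u₂ x) (fun x => t * u₃ x) →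
        t = tb) := by
  have hA := quadCoeff_pos hω₁ hω₂ hω₃ h₁ h₂ h₃ hne
  have hB := powCoeff_pos (by linarith) h₁ h₂ h₃ hne
  obtain ⟨tb, htb, hz⟩ :=
    Fibering.exists_reducedDeriv_eq_zero (C := cubicCoeff γ u₁ u₂ u₃) hA hB hp
  refine ⟨tb, htb, ⟨h₁.const_mul tb, h₂.const_mul tb, h₃.const_mul tb, ?_, ?_⟩,
    fun t ht => ?_, fun t ht hN => ?_⟩
  · rintro ⟨h₁0, h₂0, h₃0⟩
    exact hne ⟨(smul_eq_zero.mp h₁0).resolve_left htb.ne',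
      (smul_eq_zero.mp h₂0).resolve_left htb.ne', (smul_eq_zero.mp h₃0).resolve_left htb.ne'⟩
  · rw [GFun_const_mul h₁.2.1 h₂.2.1 h₃.2.1 htb, hz, mul_zero]
  · rw [IFun_const_mul h₁.2.1 h₂.2.1 h₃.2.1 ht, IFun_const_mul h₁.2.1 h₂.2.1 h₃.2.1 htb.le]
    exact Fibering.map_le_map hA hB hp htb hz ht
  · have hzt := hN.2.2.2.2
    rw [GFun_const_mul h₁.2.1 h₂.2.1 h₃.2.1 ht] at hzt
    exact Fibering.eq_of_reducedDeriv_eq_zero hA hB hp ht htb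
      ((mul_eq_zero.mp hzt).resolve_left (pow_ne_zero 2 ht.ne')) hz

theorem stmt5 (N : ℕ) (hN : 1 ≤ N) (hN3 : N ≤ 3)
    (ω₁ ω₂ ω₃ p : ℝ) (hω₁ : 0 < ω₁) (hω₂ : 0 < ω₂) (hω₃ : 0 < ω₃)
    (hp : 2 < p) (hp' : N = 3 → p < 5) (γ : ℝ)
    (u₁ u₂ u₃ : EuclideanSpace ℝ (Fin N) → ℝ)
    (h₁ : MemH1 p u₁) (h₂ : MemH1 p u₂) (h₃ : MemH1 p u₃)
    (hne : ¬(u₁ = 0 ∧ u₂ = 0 ∧ u₃ = 0)) :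
    ∃ tb : ℝ, 0 < tb ∧
      InNehari ω₁ ω₂ ω₃ γ p (fun x => tb * u₁ x) (fun x => tb * u₂ x) (fun x => tb * u₃ x) ∧
      (∀ t : ℝ, 0 ≤ t →
        IFun ω₁ ω₂ ω₃ γ p (fun x => t * u₁ x) (fun x => t * u₂ x) (fun x => t * u₃ x) ≤
        IFun ω₁ ω₂ ω₃ γ p (fun x => tb * u₁ x) (fun x => tb * u₂ x) (fun x => tb * u₃ x)) ∧
      (∀ t : ℝ, 0 < t →
        InNehari ω₁ ω₂ ω₃ γ p (fun x => t * u₁ x) (fun x => t * u₂ x) (fun x => t * u₃ x) →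
        t = tb) :=
  stmt5_general N ω₁ ω₂ ω₃ p hω₁ hω₂ hω₃ hp γ u₁ u₂ u₃ h₁ h₂ h₃ hne
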